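/- Fix 0 ≤ β < 1 and define c_k^β = sum over j from 0 to k of β^{k-j} r_j r_{k-j} with r_j = binom(2j,j)/4^j. Then for all k ≥ 1, c_{k-1}^β - c_k^β ≥ (r_{k-1} - r_k)(1-β). -/

import Mathlib

/-!
Write `c β k = ∑_{i+j=k} β^j r_i r_j`. Splitting off the corner term of the antidiagonal `n + 1`
gives `c β n - c β (n+1) = ∑_{i+j=n} β^j d_{ij} - β^(n+1) r_(n+1)` with
`d_{ij} = r_j (r_i - r_(i+1)) ≥ 0`. At `β = 1` the convolution identity `∑_{i+j=n} r_i r_j = 1`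
(from the recurrence `(2j+2) r_(j+1) = (2j+1) r_j` and the symmetry `i ↔ j`) makes both
`c 1 n` and `c 1 (n+1)` equal to `1`, so `∑ d_{ij} = r_(n+1)`. Bounding `β^j ≥ β^n`, with the
extra `1 - β^n` kept at the corner `j = 0`, yields
`c β n - c β (n+1) ≥ (1 - β^n)(r_n - r_(n+1)) + β^n (1 - β) r_(n+1)`, which dominates
`(1 - β)(r_n - r_(n+1))` because `r` is decreasing (and `2 r_1 = r_0` when `n = 0`).
-/

noncomputable def r (j : ℕ) : ℝ := (Nat.choose (2*j) j : ℝ) / 4^j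

noncomputable def c (β : ℝ) (k : ℕ) : ℝ :=
  ∑ j ∈ Finset.range (k + 1), β^(k - j) * r j * r (k - j)

open Finset Finset.Nat Finset.HasAntidiagonal

lemma r_pos (j : ℕ) : 0 < r j :=
  div_pos (mod_cast Nat.choose_pos (by omega)) (by positivity)

lemma r_zero : r 0 = 1 := by simp [r]

lemma r_one : r 1 = 1 / 2 := by norm_num [r]

lemma succ_mul_r_succ (j : ℕ) : (2 * j + 2) * r (j + 1) = (2 * j + 1) * r j := by
  have h : ((j + 1 : ℕ) : ℝ) * (2 * (j + 1)).choose (j + 1) =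
      2 * (2 * j + 1) * (2 * j).choose j := mod_cast Nat.succ_mul_centralBinom_succ j
  unfold r
  rw [pow_succ]
  field_simp
  push_cast at h
  linear_combination 2 * h

lemma r_succ_le (j : ℕ) : r (j + 1) ≤ r j := by
  nlinarith [succ_mul_r_succ j, r_pos j, r_pos (j + 1)]

lemma two_mul_sum_antidiagonal_fst_mul {R : Type*} [CommSemiring R] (g : ℕ → R) (n : ℕ) :
    2 * ∑ p ∈ antidiagonal n, (p.1 : R) * (g p.1 * g p.2) =
      n * ∑ p ∈ antidiagonal n, g p.1 * g p.2 := by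
  have hswap : ∑ p ∈ antidiagonal n, (p.1 : R) * (g p.1 * g p.2) =
      ∑ p ∈ antidiagonal n, (p.2 : R) * (g p.1 * g p.2) := by
    rw [← sum_antidiagonal_swap]
    exact sum_congr rfl fun p _ => by simp only [Prod.fst_swap, Prod.snd_swap]; ring
  rw [two_mul]
  nth_rw 2 [hswap]
  rw [← sum_add_distrib, mul_sum]
  refine sum_congr rfl fun p hp => ?_
  rw [← add_mul, ← Nat.cast_add, mem_antidiagonal.mp hp]

lemma sum_antidiagonal_r_mul_r (n : ℕ) : ∑ p ∈ antidiagonal n, r p.1 * r p.2 = 1 := by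
  induction n with
  | zero => simp [r_zero]
  | succ n ih =>
    have key : ((n : ℝ) + 1) * ∑ p ∈ antidiagonal (n + 1), r p.1 * r p.2 = (n + 1) * 1 := by
      calc ((n : ℝ) + 1) * ∑ p ∈ antidiagonal (n + 1), r p.1 * r p.2
          = 2 * ∑ p ∈ antidiagonal (n + 1), (p.1 : ℝ) * (r p.1 * r p.2) := by
            rw [two_mul_sum_antidiagonal_fst_mul]; push_cast; ring
        _ = ∑ p ∈ antidiagonal n, (2 * (p.1 : ℝ) + 2) * r (p.1 + 1) * r p.2 := by
            rw [sum_antidiagonal_succ, mul_add, mul_sum]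
            simp only [Nat.cast_zero, zero_mul, mul_zero, zero_add]
            refine sum_congr rfl fun p _ => ?_
            push_cast; ring
        _ = ∑ p ∈ antidiagonal n, (2 * (p.1 : ℝ) + 1) * (r p.1 * r p.2) := by
            refine sum_congr rfl fun p _ => ?_
            rw [succ_mul_r_succ]; ring
        _ = 2 * ∑ p ∈ antidiagonal n, (p.1 : ℝ) * (r p.1 * r p.2)
              + ∑ p ∈ antidiagonal n, r p.1 * r p.2 := by
            rw [mul_sum, ← sum_add_distrib]
            exact sum_congr rfl fun p _ => by ring
        _ = (n + 1) * 1 := by rw [two_mul_sum_antidiagonal_fst_mul, ih]; ring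
    exact mul_left_cancel₀ (by positivity) key

lemma c_eq_sum_antidiagonal (β : ℝ) (k : ℕ) :
    c β k = ∑ p ∈ antidiagonal k, β ^ p.2 * (r p.1 * r p.2) := by
  rw [sum_antidiagonal_eq_sum_range_succ (fun i j => β ^ j * (r i * r j)), c]
  exact sum_congr rfl fun _ _ => by ring

lemma c_one (k : ℕ) : c 1 k = 1 := by
  simpa [c_eq_sum_antidiagonal] using sum_antidiagonal_r_mul_r k

lemma c_sub_c_succ (β : ℝ) (n : ℕ) :
    c β n - c β (n + 1) =
      ∑ p ∈ antidiagonal n, β ^ p.2 * (r p.2 * (r p.1 - r (p.1 + 1))) -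
        β ^ (n + 1) * r (n + 1) := by
  have hdiff : ∑ p ∈ antidiagonal n, β ^ p.2 * (r p.2 * (r p.1 - r (p.1 + 1))) =
      ∑ p ∈ antidiagonal n, β ^ p.2 * (r p.1 * r p.2) -
        ∑ p ∈ antidiagonal n, β ^ p.2 * (r (p.1 + 1) * r p.2) := by
    rw [← sum_sub_distrib]
    exact sum_congr rfl fun _ _ => by ring
  rw [c_eq_sum_antidiagonal, c_eq_sum_antidiagonal, sum_antidiagonal_succ, r_zero, hdiff]
  ring

lemma sum_antidiagonal_r_mul_sub (n : ℕ) :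
    ∑ p ∈ antidiagonal n, r p.2 * (r p.1 - r (p.1 + 1)) = r (n + 1) := by
  have h := c_sub_c_succ 1 n
  simp only [one_pow, one_mul, c_one] at h
  linarith

lemma c_sub_c_succ_ge {β : ℝ} (hβ0 : 0 ≤ β) (hβ1 : β ≤ 1) (n : ℕ) :
    (1 - β ^ n) * (r n - r (n + 1)) + β ^ n * (1 - β) * r (n + 1) ≤ c β n - c β (n + 1) := by
  set d : ℕ × ℕ → ℝ := fun p => r p.2 * (r p.1 - r (p.1 + 1))
  have hd : ∀ p, 0 ≤ d p := fun p => mul_nonneg (r_pos _).le (sub_nonneg.2 (r_succ_le _))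
  have hsplit : ∑ p ∈ antidiagonal n, β ^ p.2 * d p =
      β ^ n * ∑ p ∈ antidiagonal n, d p +
        ∑ p ∈ antidiagonal n, (β ^ p.2 - β ^ n) * d p := by
    rw [mul_sum, ← sum_add_distrib]
    exact sum_congr rfl fun p _ => by ring
  have hcorner :
      (1 - β ^ n) * d (n, 0) ≤ ∑ p ∈ antidiagonal n, (β ^ p.2 - β ^ n) * d p := by
    have h := single_le_sum (s := antidiagonal n) (a := (n, 0))
      (f := fun p => (β ^ p.2 - β ^ n) * d p)
      (fun p hp => mul_nonneg
        (sub_nonneg.2 (pow_le_pow_of_le_one hβ0 hβ1 (antidiagonal.snd_le hp))) (hd p))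
      (mem_antidiagonal.2 (add_zero n))
    simpa only [pow_zero] using h
  have hsum : ∑ p ∈ antidiagonal n, d p = r (n + 1) := sum_antidiagonal_r_mul_sub n
  have hd0 : d (n, 0) = r n - r (n + 1) := by simp [d, r_zero]
  rw [c_sub_c_succ]
  change _ ≤ ∑ p ∈ antidiagonal n, β ^ p.2 * d p - _
  rw [hsum] at hsplit
  rw [hd0] at hcorner
  rw [pow_succ]
  linarith

theorem stmt_10 (β : ℝ) (hβ0 : 0 ≤ β) (hβ1 : β < 1) (k : ℕ) (hk : 1 ≤ k) :
    c β (k - 1) - c β k ≥ (r (k - 1) - r k) * (1 - β) := by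
  obtain ⟨n, rfl⟩ : ∃ n, k = n + 1 := ⟨k - 1, by omega⟩
  rw [Nat.add_sub_cancel, ge_iff_le]
  refine le_trans ?_ (c_sub_c_succ_ge hβ0 hβ1.le n)
  rcases n with _ | n
  · rw [pow_zero, r_zero, r_one]
    linarith
  · have hβpow : β ^ (n + 1) ≤ β := pow_le_of_le_one hβ0 hβ1.le n.succ_ne_zero
    have h1 := mul_nonneg (sub_nonneg.2 hβpow) (sub_nonneg.2 (r_succ_le (n + 1)))
    have h2 := mul_nonneg (mul_nonneg (pow_nonneg hβ0 (n + 1)) (sub_nonneg.2 hβ1.le))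
      (r_pos (n + 2)).le
    linarith
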